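/- arXiv:2510.19815 — 2 statements merged into one kernel-verified Lean document; each statement's English description precedes it below -/
import Mathlib

section
/- Let W[1..m] be a sequence of m ≥ 1 binary strings of length ℓ ≥ 1, with s(i) as in the definition of SeqToString, and let T = SeqToString_ℓ(W). Fix X ∈ {0,1}^{≤ℓ} and b, e ∈ [0..m] with b < e, and set P₁ = rev(X)·4·s(b) and P₂ = rev(X)·4·s(e). Then PrefixRank(W,e,X) − PrefixRank(W,b,X) = |LexRange(P₁,P₂,T)|. -/
/-!
In `T = SeqToString m W` every block `rev(W[i]) · 4 · s(i-1)` has the same length `ℓ + 1 + k`, the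
symbol `4` occurs only once per block, at offset `ℓ`, and the codes `s(·)` are order-preserving
strings of one length over `{2, 3}`. A suffix of `T` lying between `P₁` and `P₂` must begin with
`rev(X) · 4`, so it starts `|X|` symbols before the separator of some block `i`, and then
`X` is a prefix of `W[i]` and the suffix reads `rev(X) · 4 · s(i-1) · …`. Comparing `s(i-1)` with
`s(b)` and `s(e)` shows that such suffixes are exactly those with `b < i ≤ e`, which the
difference of prefix ranks counts.
-/

/-- Strict lexicographic order on strings: `U ≺ V` iff `U` is a proper prefix of `V`,
or `U` and `V` first differ at a position where `U` has the smaller symbol. -/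
def LexLt {α : Type*} [LT α] (U V : List α) : Prop := List.Lex (· < ·) U V

/-- Non-strict lexicographic order on strings. -/
def LexLe {α : Type*} [LT α] (U V : List α) : Prop := LexLt U V ∨ U = V

/-- The suffix `T[j..|T|]` of `T` (1-based index `j`). -/
def Suf {α : Type*} (T : List α) (j : ℕ) : List α := T.drop (j - 1)

/-- `Occ P T` is the set of starting positions (1-based) of occurrences of `P` in `T`. -/
def Occ {α : Type*} (P T : List α) : Set ℕ :=
  { j | 1 ≤ j ∧ j + P.length ≤ T.length + 1 ∧ (Suf T j).take P.length = P }

/-- `RangeBeg P T` = number of suffixes of `T` lexicographically smaller than `P`. -/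
noncomputable def RangeBeg {α : Type*} [LT α] (P T : List α) : ℕ :=
  { j | 1 ≤ j ∧ j ≤ T.length ∧ LexLt (Suf T j) P }.ncard

/-- `RangeEnd P T = RangeBeg P T + |Occ P T|`. -/
noncomputable def RangeEnd {α : Type*} [LT α] (P T : List α) : ℕ :=
  RangeBeg P T + (Occ P T).ncard

/-- `LexRange P₁ P₂ T` = positions `j ∈ [1..|T|]` with `P₁ ⪯ T[j..|T|] ≺ P₂`. -/
def LexRange {α : Type*} [LT α] (P₁ P₂ T : List α) : Set ℕ :=
  { j | 1 ≤ j ∧ j ≤ T.length ∧ LexLe P₁ (Suf T j) ∧ LexLt (Suf T j) P₂ }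

/-- `sa` is the suffix array of `T` (1-based): a permutation of `[1..|T|]` listing the
starting positions of the suffixes of `T` in increasing lexicographic order. -/
def IsSuffixArray {α : Type*} [LT α] (T : List α) (sa : ℕ → ℕ) : Prop :=
  (∀ i, 1 ≤ i → i ≤ T.length → 1 ≤ sa i ∧ sa i ≤ T.length) ∧
  (∀ j, 1 ≤ j → j ≤ T.length → ∃ i, 1 ≤ i ∧ i ≤ T.length ∧ sa i = j) ∧
  (∀ i j, 1 ≤ i → i < j → j ≤ T.length → LexLt (Suf T (sa i)) (Suf T (sa j)))

/-- `binSym k x` : the length-`k` binary representation of `x` (MSB first, leading zeros). -/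
def binSym (k x : ℕ) : List ℕ := (List.range k).map fun i => x / 2 ^ (k - 1 - i) % 2

/-- `binStr k S` = `bin_k(S[1]) · bin_k(S[2]) · … · bin_k(S[|S|])`. -/
def binStr (k : ℕ) (S : List ℕ) : List ℕ := (S.map (binSym k)).flatten

/-- `ebinSym k x = 1^{k+1} · 0 · bin_k(x) · 0`. -/
def ebinSym (k x : ℕ) : List ℕ := List.replicate (k + 1) 1 ++ [0] ++ binSym k x ++ [0]

/-- `ebinStr k S` = concatenation of `ebin_k(S[i])` for `i = 1, …, |S|`. -/
def ebinStr (k : ℕ) (S : List ℕ) : List ℕ := (S.map (ebinSym k)).flatten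

/-- `sEnc k i` : length-`k` base-2 representation of `i` with `0 ↦ 2` and `1 ↦ 3`. -/
def sEnc (k i : ℕ) : List ℕ := (binSym k i).map (· + 2)

/-- `SeqToString m W = ⊙_{i=1}^{m} rev(W[i]) · 4 · s(i-1)` with `k = 1 + ⌊log₂ m⌋`. -/
def SeqToString (m : ℕ) (W : ℕ → List ℕ) : List ℕ :=
  ((List.range m).map
    fun i => (W (i + 1)).reverse ++ [4] ++ sEnc (1 + Nat.log 2 m) i).flatten

/-- `PermSeqToString m π W = ⊙_{i=1}^{m} rev(W[π[i]]) · 4 · s(π[i]-1)`. -/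
def PermSeqToString (m : ℕ) (perm : ℕ → ℕ) (W : ℕ → List ℕ) : List ℕ :=
  ((List.range m).map
    fun i => (W (perm (i + 1))).reverse ++ [4]
      ++ sEnc (1 + Nat.log 2 m) (perm (i + 1) - 1)).flatten

/-- `PrefixRank W j X = |{ i ∈ [1..j] : X is a prefix of W[i] }|`. -/
noncomputable def PrefixRank {α : Type*} (W : ℕ → List α) (j : ℕ) (X : List α) : ℕ :=
  { i | 1 ≤ i ∧ i ≤ j ∧ X <+: W i }.ncard

/-- `p` is the `r`-th smallest element of the set `A ⊆ ℕ`. -/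
def IsKthSmallest (A : Set ℕ) (r p : ℕ) : Prop :=
  p ∈ A ∧ (A ∩ Set.Iic p).ncard = r

/-- Ceiling division `⌈a / b⌉` of positive naturals. -/
def cdiv (a b : ℕ) : ℕ := (a + b - 1) / b

/-- Alphabet inversion: `inv_σ(S)[i] = σ - 1 - S[i]`. -/
def invStr (σ : ℕ) (S : List ℕ) : List ℕ := S.map fun a => σ - 1 - a

/-- `p` is a period of `S`: `1 ≤ p ≤ |S|` and `S[i] = S[i+p]` for all `i ∈ [1..|S|-p]`. -/
def IsPeriod {α : Type*} (S : List α) (p : ℕ) : Prop :=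
  1 ≤ p ∧ p ≤ S.length ∧ S.drop p <+: S

/-- `per S`: the smallest period of `S`. -/
noncomputable def per {α : Type*} (S : List α) : ℕ := sInf { p | IsPeriod S p }

/-- `P` is `τ`-periodic: `|P| ≥ 3τ - 1` and `per(P[1..3τ-1]) ≤ τ/3`. -/
noncomputable def TauPeriodic {α : Type*} (τ : ℕ) (P : List α) : Prop :=
  3 * τ ≤ P.length + 1 ∧ 3 * per (P.take (3 * τ - 1)) ≤ τ

/-- `R(τ,T) = { i ∈ [1..n-3τ+2] : per(T[i..i+3τ-2]) ≤ τ/3 }`. -/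
noncomputable def Rset {α : Type*} (τ : ℕ) (T : List α) : Set ℕ :=
  { i | 1 ≤ i ∧ i + 3 * τ ≤ T.length + 2 ∧ 3 * per ((Suf T i).take (3 * τ - 1)) ≤ τ }

/-- `S` is a `τ`-synchronizing set of `T` (consistency and density conditions). -/
noncomputable def IsSyncSet {α : Type*} (τ : ℕ) (T : List α) (S : Set ℕ) : Prop :=
  (∀ j ∈ S, 1 ≤ j ∧ j + 2 * τ ≤ T.length + 1) ∧
  (∀ i j, 1 ≤ i → i + 2 * τ ≤ T.length + 1 → 1 ≤ j → j + 2 * τ ≤ T.length + 1 →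
    (Suf T i).take (2 * τ) = (Suf T j).take (2 * τ) → (i ∈ S ↔ j ∈ S)) ∧
  (∀ i, 1 ≤ i → i + 3 * τ ≤ T.length + 2 → (S ∩ Set.Ico i (i + τ) = ∅ ↔ i ∈ Rset τ T))

/-- `succ_S(x) = min { x' ∈ S : x' ≥ x }`. -/
noncomputable def succS (S : Set ℕ) (x : ℕ) : ℕ := sInf (S ∩ Set.Ici x)

/-- `DistPrefixes(τ,T,S) = { T[j..succ_S(j)+2τ) : j ∈ [1..n-3τ+2] \ R(τ,T) }`. -/
noncomputable def DistPrefixes {α : Type*} (τ : ℕ) (T : List α) (S : Set ℕ) : Set (List α) :=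
  (fun j => (Suf T j).take (succS S j + 2 * τ - j)) ''
    { j | 1 ≤ j ∧ j + 3 * τ ≤ T.length + 2 ∧ j ∉ Rset τ T }

/-- `r` is the value of the prefix RMQ: the smallest index `i ∈ (b..e]` with `X` a prefix of
`W[i]` minimizing `A[i]` (ties broken towards the smaller index). -/
def IsPrefixRMQ (A : ℕ → ℤ) (W : ℕ → List ℕ) (b e : ℕ) (X : List ℕ) (r : ℕ) : Prop :=
  (b < r ∧ r ≤ e ∧ X <+: W r) ∧
  (∀ i, b < i → i ≤ e → X <+: W i → A r ≤ A i) ∧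
  (∀ i, b < i → i ≤ e → X <+: W i → A i = A r → r ≤ i)

namespace List

variable {α : Type*}

theorem append_lt_append_left_iff [LinearOrder α] (C u v : List α) :
    C ++ u < C ++ v ↔ u < v := by
  induction C with
  | nil => rfl
  | cons a C ih => simp [ih]

theorem append_lt_iff_of_length_eq [LinearOrder α] {u v : List α} (h : u.length = v.length)
    (w : List α) : u ++ w < v ↔ u < v := by
  induction u generalizing v with
  | nil => cases v <;> simp_all
  | cons a u ih =>
    cases v with
    | nil => simp at h
    | cons b v => simp [cons_lt_cons_iff, ih (Nat.succ_injective h)]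

theorem IsPrefix.of_append_le_of_lt_append [LinearOrder α] {C u v S : List α}
    (h₁ : C ++ u ≤ S) (h₂ : S < C ++ v) : C <+: S := by
  induction C generalizing S with
  | nil => exact nil_prefix
  | cons a C ih =>
    cases S with
    | nil => exact absurd h₁ (not_le.mpr (nil_lt_cons _ _))
    | cons s S =>
      rw [← not_lt, cons_append, cons_lt_cons_iff] at h₁
      rw [cons_append, cons_lt_cons_iff] at h₂
      push Not at h₁
      obtain ⟨rfl, hS⟩ : s = a ∧ S < C ++ v := by
        rcases h₂ with h | h
        · exact absurd h h₁.1.not_gt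
        · exact h
      exact cons_prefix_cons.mpr ⟨rfl, ih (h₁.2 rfl) hS⟩

theorem eq_length_of_getElem?_append_singleton_append {u v : List α} {a : α} (hu : a ∉ u)
    (hv : a ∉ v) {t : ℕ} (h : (u ++ [a] ++ v)[t]? = some a) : t = u.length := by
  rcases lt_trichotomy t u.length with ht | ht | ht
  · rw [append_assoc, getElem?_append_left ht] at h
    exact absurd (mem_of_getElem? h) hu
  · exact ht
  · rw [getElem?_append_right (by simp; omega)] at h
    exact absurd (mem_of_getElem? h) hv

section Blocks

variable {B : ℕ → List α} {m L : ℕ}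

theorem length_flatten_map_range (hB : ∀ i < m, (B i).length = L) :
    ((range m).map B).flatten.length = m * L := by
  rw [length_flatten, map_map,
    map_congr_left (f := length ∘ B) (g := fun _ => L) fun i hi => hB i (mem_range.mp hi),
    map_const', sum_replicate, length_range, smul_eq_mul]

theorem exists_flatten_map_range_eq (hB : ∀ i < m, (B i).length = L) {i : ℕ} (hi : i < m) :
    ∃ A R, ((range m).map B).flatten = A ++ B i ++ R ∧ A.length = i * L := by
  refine ⟨((range i).map B).flatten, (((range m).map B).drop (i + 1)).flatten, ?_,
    length_flatten_map_range fun j hj => hB j (hj.trans hi)⟩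
  conv_lhs => rw [← take_append_drop i ((range m).map B),
    drop_eq_getElem_cons (by simpa using hi)]
  simp [← map_take, Nat.min_eq_left hi.le]

theorem exists_add_length_eq_of_prefix_drop_flatten {c : α} {ℓ : ℕ}
    (hB : ∀ i < m, (B i).length = L) (hc : ∀ i < m, ∀ t, (B i)[t]? = some c → t = ℓ)
    {Y : List α} {q : ℕ} (h : Y ++ [c] <+: ((range m).map B).flatten.drop q) :
    ∃ i < m, q + Y.length = i * L + ℓ := by
  set p := q + Y.length
  have hp : ((range m).map B).flatten[p]? = some c := by
    obtain ⟨R, hR⟩ := h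
    rw [← getElem?_drop, ← hR]
    simp
  have hpm : p < m * L := by
    rw [← length_flatten_map_range hB]
    exact (getElem?_eq_some_iff.mp hp).1
  have hpit : p = p / L * L + p % L := (Nat.div_add_mod' p L).symm
  set i := p / L
  set t := p % L
  have hi : i < m := Nat.div_lt_of_lt_mul (by rwa [mul_comm])
  have ht : t < (B i).length := by
    rw [hB i hi]; exact Nat.mod_lt _ (Nat.pos_of_mul_pos_left (by omega : 0 < m * L))
  obtain ⟨A, R, hT, hA⟩ := exists_flatten_map_range_eq hB hi
  rw [hT, hpit, ← hA, append_assoc, getElem?_append_right (by omega), Nat.add_sub_cancel_left,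
    getElem?_append_left ht] at hp
  exact ⟨i, hi, by rw [hpit, hc i hi t hp]⟩

end Blocks

end List

theorem Nat.lt_iff_div_lt_or_div_eq_and_mod_lt {x y n : ℕ} :
    x < y ↔ x / n < y / n ∨ x / n = y / n ∧ x % n < y % n := by
  constructor
  · intro h
    rcases (Nat.div_le_div_right (c := n) h.le).lt_or_eq with h' | h'
    · exact Or.inl h'
    · refine Or.inr ⟨h', ?_⟩
      have := Nat.div_add_mod x n
      have := Nat.div_add_mod y n
      rw [h'] at *
      omega
  · rintro (h | ⟨h, h'⟩)
    · exact Nat.lt_of_div_lt_div h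
    · have := Nat.div_add_mod x n
      have := Nat.div_add_mod y n
      rw [h] at *
      omega

theorem binSym_succ (k x : ℕ) : binSym (k + 1) x = x / 2 ^ k % 2 :: binSym k x := by
  simp only [binSym, List.range_succ_eq_map, List.map_cons, List.map_map]
  congr 1
  refine List.map_congr_left fun i hi => ?_
  simp only [Function.comp_apply, List.mem_range] at hi ⊢
  congr 3
  omega

theorem binSym_mod_two_pow (k x : ℕ) : binSym k (x % 2 ^ k) = binSym k x := by
  refine List.map_congr_left fun i hi => ?_
  rw [List.mem_range] at hi
  obtain ⟨d, hd⟩ : ∃ d, k = (k - 1 - i) + (d + 1) := ⟨i, by omega⟩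
  rw [show 2 ^ k = 2 ^ (k - 1 - i) * 2 ^ (d + 1) by rw [← pow_add, ← hd],
    Nat.mod_mul_right_div_self]
  exact Nat.mod_mod_of_dvd _ (dvd_pow_self 2 d.succ_ne_zero)

theorem binSym_lt_binSym_iff {k x y : ℕ} (hx : x < 2 ^ k) (hy : y < 2 ^ k) :
    binSym k x < binSym k y ↔ x < y := by
  induction k generalizing x y with
  | zero => simp_all [binSym]
  | succ k ih =>
    have hp : 0 < 2 ^ k := by positivity
    have hxk : x / 2 ^ k < 2 := Nat.div_lt_of_lt_mul (by rwa [← pow_succ])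
    have hyk : y / 2 ^ k < 2 := Nat.div_lt_of_lt_mul (by rwa [← pow_succ])
    rw [binSym_succ, binSym_succ, ← binSym_mod_two_pow k x, ← binSym_mod_two_pow k y,
      List.cons_lt_cons_iff, ih (Nat.mod_lt _ hp) (Nat.mod_lt _ hp),
      Nat.mod_eq_of_lt hxk, Nat.mod_eq_of_lt hyk]
    exact Nat.lt_iff_div_lt_or_div_eq_and_mod_lt.symm

theorem length_sEnc (k x : ℕ) : (sEnc k x).length = k := by simp [sEnc, binSym]

theorem sEnc_lt_sEnc_iff {k x y : ℕ} (hx : x < 2 ^ k) (hy : y < 2 ^ k) :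
    sEnc k x < sEnc k y ↔ x < y := by
  have : StrictMono (List.map (· + 2)) := fun u v => List.map_lt fun a b h => by omega
  rw [sEnc, sEnc, this.lt_iff_lt, binSym_lt_binSym_iff hx hy]

theorem four_not_mem_sEnc (k x : ℕ) : 4 ∉ sEnc k x := by
  simp only [sEnc, binSym, List.map_map, List.mem_map, List.mem_range, not_exists, not_and]
  intro i _ h
  have := Nat.mod_lt (x / 2 ^ (k - 1 - i)) two_pos
  simp only [Function.comp_apply] at h
  omega

theorem append_sEnc_append_lt_append_sEnc_iff {k i c : ℕ} (hi : i < 2 ^ k) (hc : c < 2 ^ k)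
    (C R : List ℕ) : C ++ sEnc k i ++ R < C ++ sEnc k c ↔ i < c := by
  rw [List.append_assoc, List.append_lt_append_left_iff,
    List.append_lt_iff_of_length_eq (by rw [length_sEnc, length_sEnc]), sEnc_lt_sEnc_iff hi hc]

section SeqToString

open List

variable {m ℓ : ℕ} {W : ℕ → List ℕ}

def seqBlock (m : ℕ) (W : ℕ → List ℕ) (i : ℕ) : List ℕ :=
  (W (i + 1)).reverse ++ [4] ++ sEnc (1 + Nat.log 2 m) i

theorem seqToString_eq_flatten : SeqToString m W = ((range m).map (seqBlock m W)).flatten := rfl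

theorem length_seqBlock (hWlen : ∀ i, 1 ≤ i → i ≤ m → (W i).length = ℓ) {i : ℕ} (hi : i < m) :
    (seqBlock m W i).length = ℓ + 1 + (1 + Nat.log 2 m) := by
  simp only [seqBlock, length_append, length_reverse, length_singleton, length_sEnc,
    hWlen (i + 1) (by omega) (by omega)]

theorem eq_of_getElem?_seqBlock_eq_four (hWlen : ∀ i, 1 ≤ i → i ≤ m → (W i).length = ℓ)
    (hWbin : ∀ i, 1 ≤ i → i ≤ m → ∀ a ∈ W i, a < 2) {i t : ℕ} (hi : i < m)
    (h : (seqBlock m W i)[t]? = some 4) : t = ℓ := by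
  have h4 : 4 ∉ (W (i + 1)).reverse := fun h4 => by
    have := hWbin (i + 1) (by omega) (by omega) 4 (mem_reverse.mp h4)
    omega
  rw [eq_length_of_getElem?_append_singleton_append h4 (four_not_mem_sEnc _ _) h, length_reverse,
    hWlen (i + 1) (by omega) (by omega)]

theorem exists_drop_seqToString_eq (hWlen : ∀ i, 1 ≤ i → i ≤ m → (W i).length = ℓ) {i K : ℕ}
    (hi : i < m) (hK : K ≤ ℓ) :
    ∃ R, (SeqToString m W).drop (i * (ℓ + 1 + (1 + Nat.log 2 m)) + (ℓ - K)) =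
      ((W (i + 1)).take K).reverse ++ [4] ++ sEnc (1 + Nat.log 2 m) i ++ R := by
  have hW := hWlen (i + 1) (by omega) (by omega)
  obtain ⟨A, R, hT, hA⟩ := exists_flatten_map_range_eq (fun j hj => length_seqBlock hWlen hj) hi
  refine ⟨R, ?_⟩
  have hrev : ((W (i + 1)).take K).reverse = (W (i + 1)).reverse.drop (ℓ - K) := by
    rw [reverse_take, hW]
  rw [seqToString_eq_flatten, hT, ← hA, ← drop_drop, append_assoc, drop_left,
    drop_append_of_le_length (by rw [length_seqBlock hWlen hi]; omega), seqBlock, append_assoc,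
    append_assoc, drop_append_of_le_length (by rw [length_reverse, hW]; omega), hrev]
  simp only [append_assoc]

theorem exists_of_prefix_drop_seqToString (hWlen : ∀ i, 1 ≤ i → i ≤ m → (W i).length = ℓ)
    (hWbin : ∀ i, 1 ≤ i → i ≤ m → ∀ a ∈ W i, a < 2) {X : List ℕ} (hX : X.length ≤ ℓ) {q : ℕ}
    (h : X.reverse ++ [4] <+: (SeqToString m W).drop q) :
    ∃ i < m, q = i * (ℓ + 1 + (1 + Nat.log 2 m)) + (ℓ - X.length) ∧ X <+: W (i + 1) ∧
      ∃ R, (SeqToString m W).drop q = X.reverse ++ [4] ++ sEnc (1 + Nat.log 2 m) i ++ R := by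
  obtain ⟨i, hi, hq⟩ := exists_add_length_eq_of_prefix_drop_flatten
    (fun j hj => length_seqBlock hWlen hj)
    (fun j hj t ht => eq_of_getElem?_seqBlock_eq_four hWlen hWbin hj ht) h
  rw [length_reverse] at hq
  replace hq : q = i * (ℓ + 1 + (1 + Nat.log 2 m)) + (ℓ - X.length) := by omega
  obtain ⟨R, hR⟩ := exists_drop_seqToString_eq hWlen hi hX
  rw [← hq] at hR
  have hXW : X = (W (i + 1)).take X.length := by
    have hW := hWlen (i + 1) (by omega) (by omega)
    have h' := prefix_iff_eq_take.mp h
    rw [hR, append_assoc _ _ R, take_left' (by simp [hW, hX])] at h'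
    exact reverse_injective (append_cancel_right h')
  refine ⟨i, hi, hq, hXW ▸ take_prefix _ _, R, hXW ▸ hR⟩

theorem lexRange_seqToString_eq_image (hWlen : ∀ i, 1 ≤ i → i ≤ m → (W i).length = ℓ)
    (hWbin : ∀ i, 1 ≤ i → i ≤ m → ∀ a ∈ W i, a < 2) {X : List ℕ} (hX : X.length ≤ ℓ)
    {b e : ℕ} (hbe : b ≤ e) (he : e ≤ m) :
    LexRange (X.reverse ++ [4] ++ sEnc (1 + Nat.log 2 m) b)
        (X.reverse ++ [4] ++ sEnc (1 + Nat.log 2 m) e) (SeqToString m W) =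
      (fun i => i * (ℓ + 1 + (1 + Nat.log 2 m)) + (ℓ - X.length) + 1) ''
        {i | b ≤ i ∧ i < e ∧ X <+: W (i + 1)} := by
  have hm : m < 2 ^ (1 + Nat.log 2 m) := by
    rw [add_comm]; exact Nat.lt_pow_succ_log_self one_lt_two m
  ext j
  simp only [LexRange, LexLe, LexLt, lex_lt, ← le_iff_lt_or_eq, Suf, Set.mem_ofPred_eq,
    Set.mem_image]
  constructor
  · rintro ⟨hj, -, h₁, h₂⟩
    obtain ⟨i, hi, hq, hXW, R, hS⟩ := exists_of_prefix_drop_seqToString hWlen hWbin hX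
      (IsPrefix.of_append_le_of_lt_append h₁ h₂)
    rw [hS, append_sEnc_append_lt_append_sEnc_iff (by omega) (by omega)] at h₂
    rw [hS, ← not_lt, append_sEnc_append_lt_append_sEnc_iff (by omega) (by omega)] at h₁
    exact ⟨i, ⟨by omega, h₂, hXW⟩, by omega⟩
  · rintro ⟨i, ⟨hbi, hie, hXW⟩, rfl⟩
    obtain ⟨R, hS⟩ := exists_drop_seqToString_eq hWlen (hie.trans_le he) hX
    rw [← prefix_iff_eq_take.mp hXW, ← Nat.add_sub_cancel (n := _ + _) (m := 1)] at hS
    refine ⟨by omega, ?_, ?_, ?_⟩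
    · by_contra hlen
      rw [drop_eq_nil_of_le (by omega)] at hS
      simp at hS
    · rw [hS, ← not_lt, append_sEnc_append_lt_append_sEnc_iff (by omega) (by omega)]
      omega
    · rwa [hS, append_sEnc_append_lt_append_sEnc_iff (by omega) (by omega)]

end SeqToString

theorem prefixRank_eq_ncard {α : Type*} (W : ℕ → List α) (n : ℕ) (X : List α) :
    PrefixRank W n X = {i | i < n ∧ X <+: W (i + 1)}.ncard := by
  rw [PrefixRank, ← Set.ncard_image_of_injective {i | i < n ∧ X <+: W (i + 1)} Nat.succ_injective]
  congr 1
  ext i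
  simp only [Set.mem_ofPred_eq, Set.mem_image, Nat.succ_eq_add_one]
  constructor
  · rintro ⟨hi, hin, hX⟩
    exact ⟨i - 1, by rw [Nat.sub_add_cancel hi]; exact ⟨by omega, hX⟩, by omega⟩
  · rintro ⟨i, ⟨hin, hX⟩, rfl⟩
    exact ⟨by omega, by omega, hX⟩

theorem prefixRank_sub_prefixRank {α : Type*} (W : ℕ → List α) {b e : ℕ} (hbe : b ≤ e)
    (X : List α) :
    PrefixRank W e X - PrefixRank W b X = {i | b ≤ i ∧ i < e ∧ X <+: W (i + 1)}.ncard := by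
  have hsub : {i | i < b ∧ X <+: W (i + 1)} ⊆ {i | i < e ∧ X <+: W (i + 1)} :=
    fun i ⟨hi, hX⟩ => ⟨by omega, hX⟩
  rw [prefixRank_eq_ncard, prefixRank_eq_ncard,
    ← Set.ncard_sdiff hsub ((Set.finite_lt_nat b).subset fun i hi => hi.1)]
  congr 1
  ext i
  simp only [Set.mem_sdiff, Set.mem_ofPred_eq]
  constructor
  · rintro ⟨⟨hie, hX⟩, hb⟩
    exact ⟨not_lt.mp fun h => hb ⟨h, hX⟩, hie, hX⟩
  · rintro ⟨hbi, hie, hX⟩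
    exact ⟨⟨hie, hX⟩, fun h => absurd h.1 (not_lt.mpr hbi)⟩

theorem stmt12_general (m ℓ : ℕ) (W : ℕ → List ℕ)
    (hWlen : ∀ i, 1 ≤ i → i ≤ m → (W i).length = ℓ)
    (hWbin : ∀ i, 1 ≤ i → i ≤ m → ∀ a ∈ W i, a < 2)
    (X : List ℕ) (hXlen : X.length ≤ ℓ)
    (b e : ℕ) (hbe : b < e) (he : e ≤ m) :
    PrefixRank W e X - PrefixRank W b X =
      (LexRange (X.reverse ++ [4] ++ sEnc (1 + Nat.log 2 m) b)
        (X.reverse ++ [4] ++ sEnc (1 + Nat.log 2 m) e) (SeqToString m W)).ncard := by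
  have hmono : StrictMono fun i => i * (ℓ + 1 + (1 + Nat.log 2 m)) + (ℓ - X.length) + 1 :=
    fun i j hij => by
      have := Nat.mul_lt_mul_of_pos_right hij (by omega : 0 < ℓ + 1 + (1 + Nat.log 2 m))
      dsimp only
      omega
  rw [prefixRank_sub_prefixRank W hbe.le, lexRange_seqToString_eq_image hWlen hWbin hXlen hbe.le he,
    Set.ncard_image_of_injective _ hmono.injective]

theorem stmt12 (m ℓ : ℕ) (hm : 1 ≤ m) (hℓ : 1 ≤ ℓ) (W : ℕ → List ℕ)
    (hWlen : ∀ i, 1 ≤ i → i ≤ m → (W i).length = ℓ)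
    (hWbin : ∀ i, 1 ≤ i → i ≤ m → ∀ a ∈ W i, a < 2)
    (X : List ℕ) (hXlen : X.length ≤ ℓ) (hXbin : ∀ a ∈ X, a < 2)
    (b e : ℕ) (hbe : b < e) (he : e ≤ m) :
    PrefixRank W e X - PrefixRank W b X =
      (LexRange (X.reverse ++ [4] ++ sEnc (1 + Nat.log 2 m) b)
        (X.reverse ++ [4] ++ sEnc (1 + Nat.log 2 m) e) (SeqToString m W)).ncard :=
  stmt12_general m ℓ W hWlen hWbin X hXlen b e hbe he
end

section
/- Let T ∈ Σⁿ, let τ ∈ [1..⌊n/2⌋], and let S be a τ-synchronizing set of T. Let P ∈ Σ^m be a τ-nonperiodic pattern with m ≥ 3τ − 1 and Occ(P[1..3τ−1], T) ≠ ∅. Then there exists a unique string D ∈ DistPrefixes(τ,T,S) that is a prefix of P. -/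
/-!
An occurrence `j` of `P[1..3τ-1]` in `T` lies outside `R(τ,T)` because `P` is nonperiodic, and
`DistPrefix(j)` has length `< 3τ`, so it is a prefix of `P`. The offset `succ_S(j) - j` of any
`DistPrefix(j)` that is a prefix of `P` depends on `P` only: by consistency of `S`, of two such
offsets each is at most the other. Two prefixes of `P` of the same length coincide.
-/

namespace List

variable {α : Type*}

theorem take_drop_eq_of_take_eq {L M : List α} {k δ w : ℕ} (h : L.take k = M.take k)
    (hw : δ + w ≤ k) : (L.drop δ).take w = (M.drop δ).take w := by
  have hpre : L.take (δ + w) = M.take (δ + w) := by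
    rw [← min_eq_left hw, ← take_take, h, take_take]
  rw [take_drop, take_drop, hpre]

theorem eq_of_prefix_of_prefix_of_length_eq {D D' P : List α} (hD : D <+: P) (hD' : D' <+: P)
    (hlen : D'.length = D.length) : D' = D :=
  (prefix_of_prefix_length_le hD' hD hlen.le).eq_of_length hlen

end List

section DistPrefixes

variable {α : Type*} {τ : ℕ} {T : List α} {S : Set ℕ}

theorem Suf_add (T : List α) {j : ℕ} (hj : 1 ≤ j) (δ : ℕ) :
    Suf T (j + δ) = (Suf T j).drop δ := by
  rw [Suf, Suf, List.drop_drop]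
  congr 1
  omega

theorem succS_spec {x j : ℕ} (hx : x ∈ S) (hjx : j ≤ x) :
    succS S j ∈ S ∧ j ≤ succS S j ∧ succS S j ≤ x :=
  have hmem := Nat.sInf_mem (⟨x, hx, hjx⟩ : (S ∩ Set.Ici j).Nonempty)
  ⟨hmem.1, hmem.2, Nat.sInf_le ⟨hx, hjx⟩⟩

/-- The starting positions `[1..n-3τ+2] \ R(τ,T)` over which `DistPrefixes` ranges. -/
def distStarts (τ : ℕ) (T : List α) : Set ℕ :=
  { j | 1 ≤ j ∧ j + 3 * τ ≤ T.length + 2 ∧ j ∉ Rset τ T }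

noncomputable def distPrefix (τ : ℕ) (T : List α) (S : Set ℕ) (j : ℕ) : List α :=
  (Suf T j).take (succS S j + 2 * τ - j)

theorem distPrefixes_eq_image : DistPrefixes τ T S = distPrefix τ T S '' distStarts τ T := rfl

theorem IsSyncSet.succS_mem (hS : IsSyncSet τ T S) {j : ℕ} (hj : j ∈ distStarts τ T) :
    succS S j ∈ S ∧ j ≤ succS S j ∧ succS S j < j + τ := by
  obtain ⟨hj1, hjn, hjR⟩ := hj
  obtain ⟨x, hxS, hjx, hxj⟩ :=
    Set.nonempty_iff_ne_empty.mpr (mt (hS.2.2 j hj1 hjn).mp hjR)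
  obtain ⟨hs, hjs, hsx⟩ := succS_spec hxS hjx
  exact ⟨hs, hjs, hsx.trans_lt hxj⟩

theorem IsSyncSet.length_distPrefix (hS : IsSyncSet τ T S) {j : ℕ} (hj : j ∈ distStarts τ T) :
    (distPrefix τ T S j).length = succS S j - j + 2 * τ := by
  obtain ⟨hs, hjs, -⟩ := hS.succS_mem hj
  have hsn := (hS.1 _ hs).2
  have hj1 := hj.1
  rw [distPrefix, List.length_take, Suf, List.length_drop]
  omega

theorem IsSyncSet.take_Suf_add_eq (hS : IsSyncSet τ T S) {P : List α} {j : ℕ}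
    (hj : j ∈ distStarts τ T) (hjP : distPrefix τ T S j <+: P) {δ w : ℕ}
    (hw : δ + w ≤ succS S j - j + 2 * τ) :
    (Suf T (j + δ)).take w = (P.drop δ).take w := by
  have hjs := (hS.succS_mem hj).2.1
  have htake : (Suf T j).take (succS S j + 2 * τ - j) = P.take (succS S j + 2 * τ - j) := by
    have h := List.prefix_iff_eq_take.mp hjP
    rwa [hS.length_distPrefix hj, ← Nat.sub_add_comm hjs] at h
  rw [Suf_add T hj.1]
  exact List.take_drop_eq_of_take_eq htake (by omega)

/-- Otherwise the window of `T` at `j' + (succ_S(j) - j)` would lie inside `DistPrefix(j')`,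
hence equal the window at `succ_S(j) ∈ S`, and consistency would put it in `S`. -/
theorem IsSyncSet.succS_sub_le (hS : IsSyncSet τ T S) {P : List α} {j j' : ℕ}
    (hj : j ∈ distStarts τ T) (hj' : j' ∈ distStarts τ T)
    (hjP : distPrefix τ T S j <+: P) (hj'P : distPrefix τ T S j' <+: P) :
    succS S j' - j' ≤ succS S j - j := by
  obtain ⟨hs, hjs, -⟩ := hS.succS_mem hj
  obtain ⟨hs', hj's, -⟩ := hS.succS_mem hj'
  have hsn := (hS.1 _ hs).2
  have hs'n := (hS.1 _ hs').2
  have hj1 := hj.1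
  have hj'1 := hj'.1
  set d := succS S j - j
  by_contra! hlt
  have hwin : (Suf T (j + d)).take (2 * τ) = (Suf T (j' + d)).take (2 * τ) :=
    (hS.take_Suf_add_eq hj hjP le_rfl).trans (hS.take_Suf_add_eq hj' hj'P (by omega)).symm
  have hmem : j' + d ∈ S :=
    (hS.2.1 _ _ (by omega) (by omega) (by omega) (by omega) hwin).mp
      (by rwa [show j + d = succS S j by omega])
  have := (succS_spec hmem (Nat.le_add_right j' d)).2.2
  omega

end DistPrefixes

theorem stmt19_general {α : Type*} (T : List α) (τ : ℕ)
    (S : Set ℕ) (hS : IsSyncSet τ T S)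
    (P : List α) (hm : 3 * τ ≤ P.length + 1)
    (hP : ¬ TauPeriodic τ P)
    (hocc : Occ (P.take (3 * τ - 1)) T ≠ ∅) :
    ∃! D, D ∈ DistPrefixes τ T S ∧ D <+: P := by
  obtain ⟨j, hj1, hjn, hjocc⟩ := Set.nonempty_iff_ne_empty.mpr hocc
  rw [List.length_take_of_le (by omega)] at hjn hjocc
  have hj : j ∈ distStarts τ T :=
    ⟨hj1, by omega, fun hjR => hP ⟨hm, by simpa only [hjocc] using hjR.2.2⟩⟩
  have hjP : distPrefix τ T S j <+: P := by
    have hlt := (hS.succS_mem hj).2.2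
    rw [distPrefix, ← min_eq_left (by omega : succS S j + 2 * τ - j ≤ 3 * τ - 1),
      ← List.take_take, hjocc, List.take_take]
    exact List.take_prefix _ _
  rw [distPrefixes_eq_image]
  refine ⟨_, ⟨⟨j, hj, rfl⟩, hjP⟩, ?_⟩
  rintro _ ⟨⟨j', hj', rfl⟩, hj'P⟩
  have hoffset := le_antisymm (hS.succS_sub_le hj hj' hjP hj'P) (hS.succS_sub_le hj' hj hj'P hjP)
  exact List.eq_of_prefix_of_prefix_of_length_eq hjP hj'P
    (by rw [hS.length_distPrefix hj, hS.length_distPrefix hj', hoffset])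

theorem stmt19 {α : Type*} (T : List α) (τ : ℕ)
    (hτ1 : 1 ≤ τ) (hτ2 : 2 * τ ≤ T.length)
    (S : Set ℕ) (hS : IsSyncSet τ T S)
    (P : List α) (hm : 3 * τ ≤ P.length + 1)
    (hP : ¬ TauPeriodic τ P)
    (hocc : Occ (P.take (3 * τ - 1)) T ≠ ∅) :
    ∃! D, D ∈ DistPrefixes τ T S ∧ D <+: P :=
  stmt19_general T τ S hS P hm hP hocc
end
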